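/- Under the (A,B) signGD dynamics, suppose that at some time t one has |B(t)| < |A(t)| < a/3 (the stationary subpartition R₃₁). Then for every i ∈ ℕ: A(t + 2i) = A(t), A(t + 2i + 1) = A(t) − sgn(A(t))·a, and B(t') = B(t) for all t' ≥ t; in particular A(t') alternates sign with period 2 and |A(t')| ≤ a for all t' ≥ t, while B remains constant. -/

import Mathlib

/-!
Where `|B| < |A|`, the three signs `sgn(A+B)`, `sgn A`, `sgn(A−B)` all equal `sgn A`, so one step
sends `(A, B)` to `(A − sgn(A)·a, B)`. For `0 < |A| < a/3` the new value has the opposite sign and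
modulus `a − |A| > 2a/3 > |B|`, so the next step applies the same rule and returns to `(A, B)`.
-/

/-- The frequency-domain `(A,B)` signGD error dynamics with `a = σ₀²η`, `b = σ₁²η`:
`A(t+1) = A(t) − (a/3)(sgn(A+B) + sgn(A) + sgn(A−B))` and
`B(t+1) = B(t) − (b/2)(sgn(A+B) − sgn(A−B))`. -/
def SignGDDyn (σ0sq σ1sq η : ℝ) (A B : ℕ → ℝ) : Prop :=
  (∀ t, A (t+1) = A t - σ0sq * η / 3 *
      (Real.sign (A t + B t) + Real.sign (A t) + Real.sign (A t - B t))) ∧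
  (∀ t, B (t+1) = B t - σ1sq * η / 2 *
      (Real.sign (A t + B t) - Real.sign (A t - B t)))

namespace Real

theorem sign_add_of_abs_lt {x y : ℝ} (h : |y| < |x|) : sign (x + y) = sign x := by
  rcases lt_trichotomy x 0 with hx | rfl | hx
  · rw [abs_of_neg hx] at h
    rw [sign_of_neg hx, sign_of_neg (by linarith [le_abs_self y])]
  · rw [abs_zero] at h
    exact absurd h (abs_nonneg y).not_gt
  · rw [abs_of_pos hx] at h
    rw [sign_of_pos hx, sign_of_pos (by linarith [neg_abs_le y])]

theorem sign_sub_of_abs_lt {x y : ℝ} (h : |y| < |x|) : sign (x - y) = sign x := by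
  rw [sub_eq_add_neg]
  exact sign_add_of_abs_lt (by rwa [abs_neg])

theorem sign_sub_sign_mul {x a : ℝ} (hx : x ≠ 0) (h : |x| < a) :
    sign (x - sign x * a) = -sign x := by
  rcases hx.lt_or_gt with hx | hx
  · rw [abs_of_neg hx] at h
    rw [sign_of_neg hx, sign_of_pos (by linarith), neg_neg]
  · rw [abs_of_pos hx] at h
    rw [sign_of_pos hx, sign_of_neg (by linarith)]

theorem abs_sub_sign_mul {x a : ℝ} (hx : x ≠ 0) (h : |x| ≤ a) :
    |x - sign x * a| = a - |x| := by
  rcases hx.lt_or_gt with hx | hx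
  · rw [abs_of_neg hx] at h ⊢
    rw [sign_of_neg hx, abs_of_nonneg (by linarith)]
    ring
  · rw [abs_of_pos hx] at h ⊢
    rw [sign_of_pos hx, abs_of_nonpos (by linarith)]
    ring

end Real

namespace SignGDDyn

variable {σ0sq σ1sq η : ℝ} {A B : ℕ → ℝ}

theorem step_of_abs_lt (hdyn : SignGDDyn σ0sq σ1sq η A B) {u : ℕ} (h : |B u| < |A u|) :
    A (u + 1) = A u - Real.sign (A u) * (σ0sq * η) ∧ B (u + 1) = B u := by
  rw [hdyn.1 u, hdyn.2 u, Real.sign_add_of_abs_lt h, Real.sign_sub_of_abs_lt h]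
  constructor <;> ring

theorem two_step_of_abs_lt (hdyn : SignGDDyn σ0sq σ1sq η A B) {u : ℕ}
    (hBA : |B u| < |A u|) (hAa : |A u| < σ0sq * η / 3) :
    A (u + 2) = A u ∧ B (u + 2) = B u := by
  have hA0 : A u ≠ 0 := abs_pos.mp ((abs_nonneg _).trans_lt hBA)
  have ha : |A u| < σ0sq * η := by linarith [abs_nonneg (A u)]
  obtain ⟨hA1, hB1⟩ := hdyn.step_of_abs_lt hBA
  have hBA1 : |B (u + 1)| < |A (u + 1)| := by
    rw [hA1, hB1, Real.abs_sub_sign_mul hA0 ha.le]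
    linarith
  obtain ⟨hA2, hB2⟩ := hdyn.step_of_abs_lt hBA1
  refine ⟨?_, hB2.trans hB1⟩
  rw [hA2, hA1, Real.sign_sub_sign_mul hA0 ha]
  ring

theorem periodic_of_abs_lt (hdyn : SignGDDyn σ0sq σ1sq η A B) {t : ℕ}
    (hBA : |B t| < |A t|) (hAa : |A t| < σ0sq * η / 3) (i : ℕ) :
    (A (t + 2 * i) = A t ∧ B (t + 2 * i) = B t) ∧
      (A (t + 2 * i + 1) = A t - Real.sign (A t) * (σ0sq * η) ∧ B (t + 2 * i + 1) = B t) := by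
  have heven : A (t + 2 * i) = A t ∧ B (t + 2 * i) = B t := by
    induction i with
    | zero => simp
    | succ n ih =>
      obtain ⟨hA, hB⟩ := ih
      rw [mul_add, mul_one, ← add_assoc, ← hA, ← hB]
      exact hdyn.two_step_of_abs_lt (hA ▸ hB ▸ hBA) (hA ▸ hAa)
  obtain ⟨hA, hB⟩ := heven
  refine ⟨⟨hA, hB⟩, ?_⟩
  rw [← hA, ← hB]
  exact hdyn.step_of_abs_lt (hA ▸ hB ▸ hBA)

end SignGDDyn

theorem signGD_stationary_R31_general (σ0sq σ1sq η : ℝ)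
    (A B : ℕ → ℝ) (hdyn : SignGDDyn σ0sq σ1sq η A B) (t : ℕ)
    (hBA : |B t| < |A t|) (hAa : |A t| < σ0sq * η / 3) :
    (∀ i : ℕ, A (t + 2*i) = A t ∧
      A (t + 2*i + 1) = A t - Real.sign (A t) * (σ0sq * η)) ∧
    (∀ t' ≥ t, B t' = B t) ∧
    (∀ i : ℕ, Real.sign (A (t + 2*i + 1)) = - Real.sign (A (t + 2*i))) ∧
    (∀ t' ≥ t, |A t'| ≤ σ0sq * η) := by
  have hA0 : A t ≠ 0 := abs_pos.mp ((abs_nonneg _).trans_lt hBA)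
  have ha : |A t| < σ0sq * η := by linarith [abs_nonneg (A t)]
  have hper := hdyn.periodic_of_abs_lt hBA hAa
  refine ⟨fun i => ⟨(hper i).1.1, (hper i).2.1⟩, ?_, fun i => ?_, ?_⟩
  · intro t' ht'
    obtain ⟨k, rfl⟩ := Nat.exists_eq_add_of_le ht'
    obtain ⟨i, rfl | rfl⟩ := Nat.even_or_odd' k
    exacts [(hper i).1.2, (hper i).2.2]
  · rw [(hper i).2.1, (hper i).1.1, Real.sign_sub_sign_mul hA0 ha]
  · intro t' ht'
    obtain ⟨k, rfl⟩ := Nat.exists_eq_add_of_le ht'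
    obtain ⟨i, rfl | rfl⟩ := Nat.even_or_odd' k
    · rw [(hper i).1.1]
      exact ha.le
    · rw [← add_assoc, (hper i).2.1, Real.abs_sub_sign_mul hA0 ha.le]
      linarith [abs_nonneg (A t)]

/-- In the stationary subpartition `R₃₁` (`|B(t)| < |A(t)| < a/3`): `A` is
2-periodic, alternating between `A(t)` and `A(t) − sgn(A(t))·a` with alternating
signs and `|A(t')| ≤ a`, while `B` stays constant, for all later times. -/
theorem signGD_stationary_R31 (σ0sq σ1sq η : ℝ)
    (h0 : 0 < σ0sq) (h1 : 0 < σ1sq) (hη : 0 < η)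
    (A B : ℕ → ℝ) (hdyn : SignGDDyn σ0sq σ1sq η A B) (t : ℕ)
    (hBA : |B t| < |A t|) (hAa : |A t| < σ0sq * η / 3) :
    (∀ i : ℕ, A (t + 2*i) = A t ∧
      A (t + 2*i + 1) = A t - Real.sign (A t) * (σ0sq * η)) ∧
    (∀ t' ≥ t, B t' = B t) ∧
    (∀ i : ℕ, Real.sign (A (t + 2*i + 1)) = - Real.sign (A (t + 2*i))) ∧
    (∀ t' ≥ t, |A t'| ≤ σ0sq * η) :=
  signGD_stationary_R31_general σ0sq σ1sq η A B hdyn t hBA hAa
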